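/- Let Q and R be atomic Cartesian decompositions of a finite set Ω, and suppose there is an atomic Cartesian decomposition P of Ω with Q∩R ⪯ P, where Q∩R = {e∧f : e∈Q, f∈R, e∧f ≠ 1_Ω}. Then Q∩R is also an atomic Cartesian decomposition of Ω. -/

import Mathlib

open Set

def rcomp {Ω : Type*} (r s : Set (Ω × Ω)) : Set (Ω × Ω) :=
  {p | ∃ γ, (p.1, γ) ∈ r ∧ (γ, p.2) ∈ s}

def rconv {Ω : Type*} (r : Set (Ω × Ω)) : Set (Ω × Ω) := {p | (p.2, p.1) ∈ r}

def rdiag (Ω : Type*) : Set (Ω × Ω) := {p | p.1 = p.2}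

def IsEquivRel {Ω : Type*} (e : Set (Ω × Ω)) : Prop :=
  Equivalence (fun a b => (a, b) ∈ e)

/-- The smallest equivalence relation containing `r`. -/
def eqvClosure {Ω : Type*} (r : Set (Ω × Ω)) : Set (Ω × Ω) :=
  ⋂₀ {e | IsEquivRel e ∧ r ⊆ e}

/-- Join of two equivalence relations. -/
def rjoin {Ω : Type*} (e f : Set (Ω × Ω)) : Set (Ω × Ω) := eqvClosure (e ∪ f)

def IsClass {Ω : Type*} (e : Set (Ω × Ω)) (Δ : Set Ω) : Prop :=
  ∃ α, Δ = {β | (α, β) ∈ e}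

def setoidRel {Ω : Type*} (e : Setoid Ω) : Set (Ω × Ω) := {p | e.r p.1 p.2}

/-- The relation induced on the quotient `Ω/e` by a relation `r` on `Ω`. -/
def qmap {Ω : Type*} (e : Setoid Ω) (r : Set (Ω × Ω)) :
    Set (Quotient e × Quotient e) :=
  {p | ∃ a b : Ω, Quotient.mk e a = p.1 ∧ Quotient.mk e b = p.2 ∧ (a, b) ∈ r}

/-- Tensor product of relations. -/
def tensorRel {m : ℕ} {Ω : Fin m → Type*} (s : ∀ i, Set (Ω i × Ω i)) :
    Set ((∀ i, Ω i) × (∀ i, Ω i)) :=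
  {p | ∀ i, (p.1 i, p.2 i) ∈ s i}

def tensor2 {Ω₁ Ω₂ : Type*} (s₁ : Set (Ω₁ × Ω₁)) (s₂ : Set (Ω₂ × Ω₂)) :
    Set ((Ω₁ × Ω₂) × (Ω₁ × Ω₂)) :=
  {p | (p.1.1, p.2.1) ∈ s₁ ∧ (p.1.2, p.2.2) ∈ s₂}

/-- `PP e I` is the join of the equivalence relations `e i`, `i ∈ I`. -/
def PP {Ω : Type*} {m : ℕ} (e : Fin m → Set (Ω × Ω)) (I : Set (Fin m)) :
    Set (Ω × Ω) :=
  eqvClosure (⋃ i ∈ I, e i)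

/-- An atomic Cartesian decomposition, given as a family of equivalence relations. -/
def IsACDfam {Ω : Type*} {m : ℕ} (e : Fin m → Set (Ω × Ω)) : Prop :=
  0 < m ∧ (∀ i, IsEquivRel (e i)) ∧ (∀ i, e i ≠ rdiag Ω) ∧
  (∀ i j, rcomp (e i) (e j) = rcomp (e j) (e i)) ∧
  (∀ i, e i ∩ PP e ({i}ᶜ) = rdiag Ω) ∧
  (∀ i, rjoin (e i) (PP e ({i}ᶜ)) = Set.univ)

/-- Join of a set of relations. -/
def joinAll {Ω : Type*} (B : Set (Set (Ω × Ω))) : Set (Ω × Ω) := eqvClosure (⋃₀ B)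

/-- The `P`-complement of `e`: the join of the members of `P` other than `e`. -/
def pcompl {Ω : Type*} (P : Set (Set (Ω × Ω))) (e : Set (Ω × Ω)) : Set (Ω × Ω) :=
  joinAll (P \ {e})

/-- An atomic Cartesian decomposition, given as a set of equivalence relations. -/
def IsACD {Ω : Type*} (P : Set (Set (Ω × Ω))) : Prop :=
  P.Nonempty ∧ (∀ e ∈ P, IsEquivRel e ∧ e ≠ rdiag Ω) ∧
  (∀ e ∈ P, ∀ f ∈ P, rcomp e f = rcomp f e) ∧
  (∀ e ∈ P, e ∩ pcompl P e = rdiag Ω ∧ rjoin e (pcompl P e) = Set.univ)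

def IsPartitionOf {α : Type*} (P : Set α) (C : Set (Set α)) : Prop :=
  (∀ B ∈ C, B.Nonempty) ∧ (∀ B ∈ C, ∀ B' ∈ C, B ≠ B' → Disjoint B B') ∧ ⋃₀ C = P

/-- A coherent configuration on `Ω`. -/
structure CohCfg (Ω : Type*) where
  S : Set (Set (Ω × Ω))
  empty_not_mem : ∅ ∉ S
  cover : ∀ p : Ω × Ω, ∃ s ∈ S, p ∈ s
  pairwise_disjoint : ∀ s ∈ S, ∀ t ∈ S, s ≠ t → Disjoint s t
  diag_union : ∀ s ∈ S, (s ∩ rdiag Ω).Nonempty → s ⊆ rdiag Ω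
  conv_mem : ∀ s ∈ S, rconv s ∈ S
  inter_const : ∀ r ∈ S, ∀ s ∈ S, ∀ t ∈ S, ∀ p ∈ t, ∀ q ∈ t,
    ({γ : Ω | (p.1, γ) ∈ r ∧ (γ, p.2) ∈ s}).ncard
      = ({γ : Ω | (q.1, γ) ∈ r ∧ (γ, q.2) ∈ s}).ncard

/-- The valency of a basis relation (the common size of the rows over the left support). -/
noncomputable def valency {Ω : Type*} (s : Set (Ω × Ω)) : ℕ :=
  sSup ((fun α => ({β | (α, β) ∈ s} : Set Ω).ncard) '' {α | ∃ β, (α, β) ∈ s})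

def IsThick {Ω : Type*} (X : CohCfg Ω) : Prop :=
  ∀ s ∈ X.S, Disjoint s (rdiag Ω) → ¬(valency s = 1 ∧ valency (rconv s) = 1)

def IsParabolic {Ω : Type*} (X : CohCfg Ω) (e : Set (Ω × Ω)) : Prop :=
  IsEquivRel e ∧ ∀ s ∈ X.S, (s ∩ e).Nonempty → s ⊆ e

def Perp {Ω : Type*} (X : CohCfg Ω) (e f : Set (Ω × Ω)) : Prop :=
  ∀ x ∈ X.S, x ⊆ e → ∀ y ∈ X.S, y ⊆ f → (rcomp x y).Nonempty → rcomp x y ∈ X.S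

def Redundant {Ω : Type*} (X : CohCfg Ω) (s : Set (Ω × Ω)) : Prop :=
  ∃ x ∈ X.S, ∃ y ∈ X.S, Disjoint x (rdiag Ω) ∧ Disjoint y (rdiag Ω) ∧
    s = rcomp x y ∧ eqvClosure x ∩ eqvClosure y = rdiag Ω

/-! If `P` refines both `Q` and `R`, every member of `Q` or `R` is the join of the members
of `P` below it. Joins of subfamilies of an atomic Cartesian decomposition are compositions, they
commute, and they meet as the subfamilies intersect, so `e ∩ f` is the join of the members of `P`
below both `e` and `f`. The nondiagonal meets `e ∩ f` thus group the members of `P` into disjoint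
blocks, and the coarsening of an atomic Cartesian decomposition along a partition is again one. -/

section Relations

variable {Ω : Type*}

lemma IsEquivRel.diag_subset {e : Set (Ω × Ω)} (he : IsEquivRel e) : rdiag Ω ⊆ e := by
  rintro ⟨a, b⟩ (rfl : a = b)
  exact he.refl a

lemma isEquivRel_eqvClosure (r : Set (Ω × Ω)) : IsEquivRel (eqvClosure r) :=
  ⟨fun a => mem_sInter.2 fun _ he => he.1.refl a,
    fun h => mem_sInter.2 fun e he => he.1.symm (mem_sInter.1 h e he),
    fun h₁ h₂ => mem_sInter.2 fun e he =>
      he.1.trans (mem_sInter.1 h₁ e he) (mem_sInter.1 h₂ e he)⟩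

lemma subset_eqvClosure (r : Set (Ω × Ω)) : r ⊆ eqvClosure r :=
  fun _ hp => mem_sInter.2 fun _ he => he.2 hp

lemma eqvClosure_subset {r e : Set (Ω × Ω)} (he : IsEquivRel e) (h : r ⊆ e) :
    eqvClosure r ⊆ e :=
  sInter_subset_of_mem ⟨he, h⟩

lemma rcomp_assoc (r s t : Set (Ω × Ω)) : rcomp (rcomp r s) t = rcomp r (rcomp s t) := by
  ext ⟨a, b⟩
  constructor
  · rintro ⟨γ, ⟨δ, h₁, h₂⟩, h₃⟩
    exact ⟨δ, h₁, γ, h₂, h₃⟩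
  · rintro ⟨γ, h₁, δ, h₂, h₃⟩
    exact ⟨δ, ⟨γ, h₁, h₂⟩, h₃⟩

lemma rcomp_rdiag (r : Set (Ω × Ω)) : rcomp r (rdiag Ω) = r := by
  ext ⟨a, b⟩
  exact ⟨fun ⟨_, h, (hγ : _ = b)⟩ => hγ ▸ h, fun h => ⟨b, h, rfl⟩⟩

lemma rdiag_rcomp (r : Set (Ω × Ω)) : rcomp (rdiag Ω) r = r := by
  ext ⟨a, b⟩
  exact ⟨fun ⟨_, (hγ : a = _), h⟩ => hγ ▸ h, fun h => ⟨a, rfl, h⟩⟩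

lemma subset_rcomp_left {r e : Set (Ω × Ω)} (he : IsEquivRel e) : r ⊆ rcomp r e :=
  fun ⟨_, b⟩ h => ⟨b, h, he.refl b⟩

lemma subset_rcomp_right {e r : Set (Ω × Ω)} (he : IsEquivRel e) : r ⊆ rcomp e r :=
  fun ⟨a, _⟩ h => ⟨a, he.refl a, h⟩

lemma rcomp_subset {r s e : Set (Ω × Ω)} (he : IsEquivRel e) (hr : r ⊆ e) (hs : s ⊆ e) :
    rcomp r s ⊆ e :=
  fun _ ⟨_, h₁, h₂⟩ => he.trans (hr h₁) (hs h₂)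

lemma rcomp_comm_rcomp {r s t : Set (Ω × Ω)} (hs : rcomp r s = rcomp s r)
    (ht : rcomp r t = rcomp t r) : rcomp r (rcomp s t) = rcomp (rcomp s t) r := by
  rw [← rcomp_assoc, hs, rcomp_assoc, ht, rcomp_assoc]

lemma IsEquivRel.rcomp {e f : Set (Ω × Ω)} (he : IsEquivRel e) (hf : IsEquivRel f)
    (hc : rcomp e f = rcomp f e) : IsEquivRel (rcomp e f) := by
  refine ⟨fun a => ⟨a, he.refl a, hf.refl a⟩, fun {a b} ⟨γ, h₁, h₂⟩ => ?_,
    fun {a b c} ⟨γ, h₁, h₂⟩ ⟨δ, h₃, h₄⟩ => ?_⟩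
  · rw [hc]
    exact ⟨γ, hf.symm h₂, he.symm h₁⟩
  · obtain ⟨ε, h₅, h₆⟩ : (γ, δ) ∈ _root_.rcomp e f := hc ▸ ⟨b, h₂, h₃⟩
    exact ⟨ε, he.trans h₁ h₅, hf.trans h₆ h₄⟩

lemma isEquivRel_joinAll (B : Set (Set (Ω × Ω))) : IsEquivRel (joinAll B) :=
  isEquivRel_eqvClosure _

lemma subset_joinAll {B : Set (Set (Ω × Ω))} {g : Set (Ω × Ω)} (hg : g ∈ B) :
    g ⊆ joinAll B :=
  (subset_sUnion_of_mem hg).trans (subset_eqvClosure _)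

lemma joinAll_subset {B : Set (Set (Ω × Ω))} {e : Set (Ω × Ω)} (he : IsEquivRel e)
    (h : ∀ g ∈ B, g ⊆ e) : joinAll B ⊆ e :=
  eqvClosure_subset he (sUnion_subset h)

lemma joinAll_mono {B C : Set (Set (Ω × Ω))} (h : B ⊆ C) : joinAll B ⊆ joinAll C :=
  joinAll_subset (isEquivRel_joinAll C) fun _ hg => subset_joinAll (h hg)

lemma isEquivRel_rdiag : IsEquivRel (rdiag Ω) :=
  ⟨fun _ => rfl, fun h => h.symm, fun h₁ h₂ => h₁.trans h₂⟩

lemma joinAll_empty : joinAll (∅ : Set (Set (Ω × Ω))) = rdiag Ω :=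
  (joinAll_subset isEquivRel_rdiag fun _ h => h.elim).antisymm
    (isEquivRel_joinAll ∅).diag_subset

lemma joinAll_singleton {e : Set (Ω × Ω)} (he : IsEquivRel e) : joinAll {e} = e :=
  (joinAll_subset he fun _ h => (mem_singleton_iff.1 h).subset).antisymm (subset_joinAll rfl)

lemma joinAll_union_of_comm {I J : Set (Set (Ω × Ω))}
    (hc : rcomp (joinAll I) (joinAll J) = rcomp (joinAll J) (joinAll I)) :
    joinAll (I ∪ J) = rcomp (joinAll I) (joinAll J) := by
  refine (joinAll_subset ((isEquivRel_joinAll I).rcomp (isEquivRel_joinAll J) hc) ?_).antisymm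
    (rcomp_subset (isEquivRel_joinAll _) (joinAll_mono subset_union_left)
      (joinAll_mono subset_union_right))
  rintro g (hg | hg)
  · exact (subset_joinAll hg).trans (subset_rcomp_left (isEquivRel_joinAll J))
  · exact (subset_joinAll hg).trans (subset_rcomp_right (isEquivRel_joinAll I))

end Relations

section CommutingFamily

variable {Ω : Type*} {P : Set (Set (Ω × Ω))}

lemma rcomp_joinAll_comm (hEq : ∀ g ∈ P, IsEquivRel g)
    (hComm : ∀ g ∈ P, ∀ h ∈ P, rcomp g h = rcomp h g) {J : Set (Set (Ω × Ω))}
    (hJ : J.Finite) (hJP : J ⊆ P) {r : Set (Ω × Ω)} (hr : ∀ g ∈ J, rcomp r g = rcomp g r) :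
    rcomp r (joinAll J) = rcomp (joinAll J) r := by
  induction J, hJ using Set.Finite.induction_on generalizing r with
  | empty => rw [joinAll_empty, rcomp_rdiag, rdiag_rcomp]
  | @insert a s _ _ ih =>
    have haP : a ∈ P := hJP (mem_insert a s)
    have hsP : s ⊆ P := (subset_insert a s).trans hJP
    have has : rcomp a (joinAll s) = rcomp (joinAll s) a :=
      ih hsP fun g hg => hComm a haP g (hsP hg)
    rw [insert_eq, joinAll_union_of_comm (by rwa [joinAll_singleton (hEq a haP)]),
      joinAll_singleton (hEq a haP)]
    exact rcomp_comm_rcomp (hr a (mem_insert a s))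
      (ih hsP fun g hg => hr g (mem_insert_of_mem a hg))

lemma joinAll_comm (hEq : ∀ g ∈ P, IsEquivRel g)
    (hComm : ∀ g ∈ P, ∀ h ∈ P, rcomp g h = rcomp h g) {I J : Set (Set (Ω × Ω))}
    (hI : I.Finite) (hIP : I ⊆ P) (hJ : J.Finite) (hJP : J ⊆ P) :
    rcomp (joinAll I) (joinAll J) = rcomp (joinAll J) (joinAll I) :=
  rcomp_joinAll_comm hEq hComm hJ hJP fun g hg =>
    (rcomp_joinAll_comm hEq hComm hI hIP fun f hf => hComm g (hJP hg) f (hIP hf)).symm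

end CommutingFamily

section IsACD

variable {Ω : Type*} {P X : Set (Set (Ω × Ω))}

lemma IsACD.isEquivRel (hP : IsACD P) {g : Set (Ω × Ω)} (hg : g ∈ P) : IsEquivRel g :=
  (hP.2.1 g hg).1

lemma IsACD.ne_rdiag (hP : IsACD P) {g : Set (Ω × Ω)} (hg : g ∈ P) : g ≠ rdiag Ω :=
  (hP.2.1 g hg).2

lemma IsACD.inter_pcompl (hP : IsACD P) {g : Set (Ω × Ω)} (hg : g ∈ P) :
    g ∩ pcompl P g = rdiag Ω :=
  (hP.2.2.2 g hg).1

lemma IsACD.rjoin_pcompl (hP : IsACD P) {g : Set (Ω × Ω)} (hg : g ∈ P) :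
    rjoin g (pcompl P g) = univ :=
  (hP.2.2.2 g hg).2

lemma IsACD.joinAll_eq_univ (hP : IsACD P) : joinAll P = univ := by
  obtain ⟨g, hg⟩ := hP.1
  refine eq_univ_of_univ_subset (hP.rjoin_pcompl hg ▸ eqvClosure_subset (isEquivRel_joinAll P) ?_)
  exact union_subset (subset_joinAll hg) (joinAll_mono sdiff_subset)

lemma IsACD.eq_of_subset_of_subset (hP : IsACD P) {e f g : Set (Ω × Ω)} (he : e ∈ P)
    (hf : f ∈ P) (hg : IsEquivRel g) (hg_ne : g ≠ rdiag Ω) (hge : g ⊆ e) (hgf : g ⊆ f) :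
    e = f := by
  by_contra hef
  have hf_compl : f ⊆ pcompl P e := subset_joinAll ⟨hf, Ne.symm hef⟩
  have hg_diag : g ⊆ rdiag Ω := hP.inter_pcompl he ▸ subset_inter hge (hgf.trans hf_compl)
  exact hg_ne (hg_diag.antisymm hg.diag_subset)

lemma joinAll_diff_subset_pcompl (hcov : ∀ g ∈ P, ∃ x ∈ X, g ⊆ x) (x : Set (Ω × Ω)) :
    joinAll (P \ {g ∈ P | g ⊆ x}) ⊆ pcompl X x := by
  refine joinAll_subset (isEquivRel_joinAll _) fun g ⟨hg, hgx⟩ => ?_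
  obtain ⟨y, hy, hgy⟩ := hcov g hg
  exact hgy.trans (subset_joinAll ⟨hy, fun hyx => hgx ⟨hg, hyx ▸ hgy⟩⟩)

lemma pcompl_eq_joinAll_diff
    (hjoin : ∀ x ∈ X, x = joinAll {g ∈ P | g ⊆ x}) (hcov : ∀ g ∈ P, ∃ x ∈ X, g ⊆ x)
    (hdisj : ∀ x ∈ X, ∀ y ∈ X, ∀ g ∈ P, g ⊆ x → g ⊆ y → x = y) {x : Set (Ω × Ω)}
    (hx : x ∈ X) : pcompl X x = joinAll (P \ {g ∈ P | g ⊆ x}) := by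
  refine subset_antisymm (joinAll_subset (isEquivRel_joinAll _) ?_)
    (joinAll_diff_subset_pcompl hcov x)
  rintro y ⟨hy, hyx⟩
  rw [hjoin y hy]
  exact joinAll_mono fun g ⟨hg, hgy⟩ =>
    ⟨hg, fun ⟨_, hgx⟩ => hyx (hdisj y hy x hx g hg hgy hgx)⟩

end IsACD

section FiniteACD

variable {Ω : Type*} [Finite Ω] {P I J : Set (Set (Ω × Ω))}

lemma IsACD.joinAll_comm (hP : IsACD P) (hI : I ⊆ P) (hJ : J ⊆ P) :
    rcomp (joinAll I) (joinAll J) = rcomp (joinAll J) (joinAll I) :=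
  _root_.joinAll_comm (fun _ => hP.isEquivRel) hP.2.2.1 (toFinite I) hI (toFinite J) hJ

lemma IsACD.joinAll_union (hP : IsACD P) (hI : I ⊆ P) (hJ : J ⊆ P) :
    joinAll (I ∪ J) = rcomp (joinAll I) (joinAll J) :=
  joinAll_union_of_comm (hP.joinAll_comm hI hJ)

lemma IsACD.joinAll_inter_joinAll_diff (hP : IsACD P) (hI : I ⊆ P) :
    joinAll I ∩ joinAll (P \ I) = rdiag Ω := by
  refine subset_antisymm ?_ (subset_inter (isEquivRel_joinAll _).diag_subset
    (isEquivRel_joinAll _).diag_subset)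
  induction I, toFinite I using Set.Finite.induction_on with
  | empty => exact joinAll_empty ▸ inter_subset_left
  | @insert g s hgs _ ih =>
    have hgP : g ∈ P := hI (mem_insert g s)
    have hsP : s ⊆ P := (subset_insert g s).trans hI
    rintro ⟨a, b⟩ ⟨hab, hab_compl⟩
    rw [insert_eq, hP.joinAll_union (singleton_subset_iff.2 hgP) hsP,
      joinAll_singleton (hP.isEquivRel hgP)] at hab
    obtain ⟨γ, haγ, hγb⟩ := hab
    have hg_compl : g ⊆ joinAll (P \ s) := subset_joinAll ⟨hgP, hgs⟩
    have hγb_compl : (γ, b) ∈ joinAll (P \ s) :=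
      (isEquivRel_joinAll _).trans ((isEquivRel_joinAll _).symm (hg_compl haγ))
        (joinAll_mono (sdiff_subset_sdiff_right (subset_insert g s)) hab_compl)
    obtain rfl : γ = b := ih hsP ⟨hγb, hγb_compl⟩
    rw [← hP.inter_pcompl hgP]
    have hcompl_sub : P \ insert g s ⊆ P \ {g} :=
      sdiff_subset_sdiff_right (singleton_subset_iff.2 (mem_insert g s))
    exact ⟨haγ, joinAll_mono hcompl_sub hab_compl⟩

lemma IsACD.joinAll_inter (hP : IsACD P) (hI : I ⊆ P) (hJ : J ⊆ P) :
    joinAll I ∩ joinAll J = joinAll (I ∩ J) := by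
  refine subset_antisymm ?_
    (subset_inter (joinAll_mono inter_subset_left) (joinAll_mono inter_subset_right))
  rintro ⟨a, b⟩ ⟨haI, haJ⟩
  rw [← union_sdiff_cancel (inter_subset_left : I ∩ J ⊆ I),
    hP.joinAll_union (inter_subset_left.trans hI) (sdiff_subset.trans hI)] at haI
  obtain ⟨γ, haγ, hγb⟩ := haI
  have hγb_J : (γ, b) ∈ joinAll J :=
    (isEquivRel_joinAll J).trans
      ((isEquivRel_joinAll J).symm (joinAll_mono inter_subset_right haγ)) haJ
  have hJ_compl : J ⊆ P \ (I \ (I ∩ J)) := fun f hf => ⟨hJ hf, fun h => h.2 ⟨h.1, hf⟩⟩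
  obtain rfl : γ = b :=
    (hP.joinAll_inter_joinAll_diff (sdiff_subset.trans hI)).subset
      ⟨hγb, joinAll_mono hJ_compl hγb_J⟩
  exact haγ

lemma IsACD.eq_joinAll_of_refines {Q : Set (Set (Ω × Ω))} (hQ : IsACD Q) (hP : IsACD P)
    (hcov : ∀ g ∈ P, ∃ e ∈ Q, g ⊆ e) {q : Set (Ω × Ω)} (hq : q ∈ Q) :
    q = joinAll {g ∈ P | g ⊆ q} := by
  have hq_equiv := hQ.isEquivRel hq
  have hbelow_q : joinAll {g ∈ P | g ⊆ q} ⊆ q := joinAll_subset hq_equiv fun g hg => hg.2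
  refine subset_antisymm ?_ hbelow_q
  rintro ⟨a, b⟩ hab
  have hsplit :
      (a, b) ∈ rcomp (joinAll {g ∈ P | g ⊆ q}) (joinAll (P \ {g ∈ P | g ⊆ q})) := by
    rw [← hP.joinAll_union (sep_subset _ _) sdiff_subset, union_sdiff_cancel (sep_subset _ _),
      hP.joinAll_eq_univ]
    trivial
  obtain ⟨γ, haγ, hγb⟩ := hsplit
  have hγb_q : (γ, b) ∈ q := hq_equiv.trans (hq_equiv.symm (hbelow_q haγ)) hab
  obtain rfl : γ = b :=
    (hQ.inter_pcompl hq).subset ⟨hγb_q, joinAll_diff_subset_pcompl hcov q hγb⟩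
  exact haγ

theorem IsACD.of_coarsening {X : Set (Set (Ω × Ω))} (hP : IsACD P)
    (hX_ne : ∀ x ∈ X, x ≠ rdiag Ω) (hjoin : ∀ x ∈ X, x = joinAll {g ∈ P | g ⊆ x})
    (hcov : ∀ g ∈ P, ∃ x ∈ X, g ⊆ x)
    (hdisj : ∀ x ∈ X, ∀ y ∈ X, ∀ g ∈ P, g ⊆ x → g ⊆ y → x = y) : IsACD X := by
  refine ⟨?_, fun x hx => ⟨hjoin x hx ▸ isEquivRel_joinAll _, hX_ne x hx⟩,
    fun x hx y hy => ?_, fun x hx => ?_⟩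
  · obtain ⟨g, hg⟩ := hP.1
    obtain ⟨x, hx, -⟩ := hcov g hg
    exact ⟨x, hx⟩
  · rw [hjoin x hx, hjoin y hy]
    exact hP.joinAll_comm (sep_subset _ _) (sep_subset _ _)
  rw [pcompl_eq_joinAll_diff hjoin hcov hdisj hx]
  constructor
  · nth_rw 1 [hjoin x hx]
    exact hP.joinAll_inter_joinAll_diff (sep_subset _ _)
  · refine eq_univ_of_univ_subset (hP.joinAll_eq_univ.symm.trans_subset
      (joinAll_subset (isEquivRel_eqvClosure _) fun g hg => ?_))
    by_cases hgx : g ⊆ x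
    · exact hgx.trans (subset_union_left.trans (subset_eqvClosure _))
    · have hg_compl : g ∈ P \ {g ∈ P | g ⊆ x} := ⟨hg, fun h => hgx h.2⟩
      exact (subset_joinAll hg_compl).trans (subset_union_right.trans (subset_eqvClosure _))

end FiniteACD

/-- if `Q∩R ⪯ P` for some atomic Cartesian decomposition `P`, then
`Q∩R` is an atomic Cartesian decomposition. -/
theorem stmt11 {Ω : Type*} [Fintype Ω] (Q R P : Set (Set (Ω × Ω)))
    (hQ : IsACD Q) (hR : IsACD R) (hP : IsACD P)
    (hle : ∀ g ∈ P, ∃ x ∈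
      {x | ∃ e ∈ Q, ∃ f ∈ R, x = e ∩ f ∧ x ≠ rdiag Ω}, g ⊆ x) :
    IsACD {x | ∃ e ∈ Q, ∃ f ∈ R, x = e ∩ f ∧ x ≠ rdiag Ω} := by
  have hcovQ : ∀ g ∈ P, ∃ e ∈ Q, g ⊆ e := fun g hg => by
    obtain ⟨-, ⟨e, he, f, -, rfl, -⟩, hg_ef⟩ := hle g hg
    exact ⟨e, he, hg_ef.trans inter_subset_left⟩
  have hcovR : ∀ g ∈ P, ∃ f ∈ R, g ⊆ f := fun g hg => by
    obtain ⟨-, ⟨e, -, f, hf, rfl, -⟩, hg_ef⟩ := hle g hg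
    exact ⟨f, hf, hg_ef.trans inter_subset_right⟩
  refine hP.of_coarsening ?_ ?_ hle ?_
  · rintro _ ⟨-, -, -, -, -, hx⟩
    exact hx
  · rintro _ ⟨e, he, f, hf, rfl, -⟩
    calc e ∩ f = joinAll {g ∈ P | g ⊆ e} ∩ joinAll {g ∈ P | g ⊆ f} :=
          congrArg₂ (· ∩ ·) (hQ.eq_joinAll_of_refines hP hcovQ he)
            (hR.eq_joinAll_of_refines hP hcovR hf)
      _ = joinAll {g ∈ P | g ⊆ e ∩ f} := by
          simp_rw [hP.joinAll_inter (sep_subset _ _) (sep_subset _ _), subset_inter_iff, sep_and]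
  · rintro _ ⟨e, he, f, hf, rfl, -⟩ _ ⟨e', he', f', hf', rfl, -⟩ g hg hg_ef hg_ef'
    have hg_equiv := hP.isEquivRel hg
    have hg_ne := hP.ne_rdiag hg
    rw [hQ.eq_of_subset_of_subset he he' hg_equiv hg_ne (hg_ef.trans inter_subset_left)
        (hg_ef'.trans inter_subset_left),
      hR.eq_of_subset_of_subset hf hf' hg_equiv hg_ne (hg_ef.trans inter_subset_right)
        (hg_ef'.trans inter_subset_right)]
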